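/- Let (V, W) be jointly Gaussian random variables with mean (ν_v, ν_w) and positive definite covariance matrix Σ = [[σ_v², γ], [γ, σ_w²]]. Then the random variable X = W/V has probability density h(x) = (e^{-c} / (2π |Σ|^{1/2} a(x))) · ₁F₁(1, 1/2, b(x)²/a(x)), where a(x) = (σ_w² − 2γx + σ_v²x²)/(2|Σ|), b(x) = (σ_w²ν_v − γν_w − γν_v x + σ_v²ν_w x)/(2|Σ|), c = (σ_w²ν_v² − 2γν_wν_v + σ_v²ν_w²)/(2|Σ|), and |Σ| = σ_v²σ_w² − γ². -/

import Mathlib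

/-!
The map `(x, v) ↦ (v, x v)` is injective off `{v = 0}` with Jacobian `|v|`, so the change of
variables formula and Fubini show that `W / V` has density `x ↦ ∫ |v| f(v, x v) dv`, where `f` is
the joint density. Along the line `w = x v` the exponent of `f` is `-a(x) v² + 2 b(x) v - c`, and
`∫ |v| exp(-a v² + 2 b v) dv = ₁F₁(1, 1/2, b²/a) / a`: folding the integral onto `v > 0` gives
`∫₀^∞ 2 v exp(-a v²) cosh(2 b v) dv`, integrating the cosh series term by term gives
`∑ (4 b²)^m m! / ((2m)! a^(m+1))`, and `(1/2)_m = (2m)! / (4^m m!)` identifies this with the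
hypergeometric series.
-/

/-- The confluent hypergeometric function of the first kind,
`₁F₁(a, b, z) = ∑_{k≥0} (a)_k z^k / ((b)_k k!)`. -/
noncomputable def hyp1F1 (a b z : ℝ) : ℝ :=
  ∑' k : ℕ, ((ascPochhammer ℝ k).eval a * z ^ k) /
    ((ascPochhammer ℝ k).eval b * (Nat.factorial k))

open Real MeasureTheory Set
open scoped Nat

lemma ascPochhammer_eval_half (k : ℕ) :
    (ascPochhammer ℝ k).eval (1 / 2) = (2 * k)! / (4 ^ k * k !) := by
  rw [eq_div_iff (by positivity)]
  induction k with
  | zero => simp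
  | succ n ih =>
    rw [ascPochhammer_succ_eval, show 2 * (n + 1) = 2 * n + 1 + 1 by ring,
      Nat.factorial_succ, Nat.factorial_succ, Nat.factorial_succ, pow_succ]
    push_cast
    linear_combination (4 * (1 / 2 + (n : ℝ)) * (n + 1)) * ih

lemma hyp1F1_one_one_half (z : ℝ) :
    hyp1F1 1 (1 / 2) z = ∑' m : ℕ, 4 ^ m * m ! * z ^ m / (2 * m)! := by
  refine tsum_congr fun m => ?_
  rw [ascPochhammer_eval_one, ascPochhammer_eval_half]
  field_simp

lemma summable_pow_mul_factorial_div_factorial_two_mul (x : ℝ) :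
    Summable fun m : ℕ => x ^ m * m ! / (2 * m)! := by
  refine (Real.summable_pow_div_factorial |x|).of_norm_bounded fun m => ?_
  have hfact : (m ! * m ! : ℝ) ≤ (2 * m)! := by
    rw [two_mul]
    exact_mod_cast Nat.le_of_dvd (Nat.factorial_pos _)
      (Nat.factorial_mul_factorial_dvd_factorial_add m m)
  rw [norm_div, norm_mul, norm_pow, Real.norm_eq_abs, RCLike.norm_natCast, RCLike.norm_natCast,
    div_le_div_iff₀ (by positivity) (by positivity), mul_assoc]
  gcongr

lemma integral_Ioi_odd_pow_mul_exp_neg_mul_sq {a : ℝ} (ha : 0 < a) (m : ℕ) :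
    ∫ v in Ioi (0 : ℝ), v ^ (2 * m + 1) * exp (-(a * v ^ 2)) = m ! / (2 * a ^ (m + 1)) := by
  have h := integral_rpow_mul_exp_neg_mul_rpow (p := (2 : ℕ)) (q := (2 * m + 1 : ℕ))
    (by norm_num) (by linarith [(2 * m + 1 : ℕ).cast_nonneg (α := ℝ)]) ha
  have hq : (((2 * m + 1 : ℕ) : ℝ) + 1) / 2 = (m : ℝ) + 1 := by push_cast; ring
  simp only [rpow_natCast, Nat.cast_ofNat, rpow_two, neg_div, hq, rpow_neg ha.le,
    Gamma_nat_eq_factorial, neg_mul] at h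
  refine h.trans ?_
  rw [← Nat.cast_succ, rpow_natCast]
  field_simp

lemma integrable_abs_mul_exp_neg_mul_sq_add {a : ℝ} (ha : 0 < a) (b : ℝ) :
    Integrable fun v : ℝ => |v| * exp (-(a * v ^ 2) + 2 * b * v) := by
  have hdom : Integrable fun u : ℝ => (|u| + |b / a|) * exp (-a * u ^ 2) := by
    simpa only [Pi.add_def, add_mul, norm_mul, Real.norm_eq_abs, abs_of_pos (exp_pos _)] using
      (integrable_mul_exp_neg_mul_sq ha).norm.add ((integrable_exp_neg_mul_sq ha).const_mul |b / a|)
  refine ((hdom.comp_sub_right (b / a)).const_mul (exp (b ^ 2 / a))).mono' (by fun_prop)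
    (.of_forall fun v => ?_)
  have hsq : -(a * v ^ 2) + 2 * b * v = b ^ 2 / a + -a * (v - b / a) ^ 2 := by
    field_simp; ring
  rw [Real.norm_eq_abs, abs_mul, abs_abs, abs_of_pos (exp_pos _), hsq, exp_add, mul_left_comm]
  gcongr
  calc |v| = |(v - b / a) + b / a| := by ring_nf
    _ ≤ |v - b / a| + |b / a| := abs_add_le _ _

lemma integral_eq_integral_Ioi_add_comp_neg {E : Type*} [NormedAddCommGroup E] [NormedSpace ℝ E]
    {f : ℝ → E} (hf : Integrable f) : ∫ v, f v = ∫ v in Ioi 0, (f v + f (-v)) := by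
  rw [integral_add hf.integrableOn hf.comp_neg.integrableOn, integral_comp_neg_Ioi, neg_zero,
    ← compl_Ioi, integral_add_compl measurableSet_Ioi hf]

lemma integral_Ioi_mul_exp_neg_mul_sq_mul_cosh {a : ℝ} (ha : 0 < a) (b : ℝ) :
    ∫ v in Ioi (0 : ℝ), 2 * v * exp (-(a * v ^ 2)) * cosh (2 * b * v) =
      ∑' m : ℕ, (4 * b ^ 2) ^ m / (2 * m)! * (m ! / a ^ (m + 1)) := by
  set g : ℕ → ℝ → ℝ := fun m v =>
    (4 * b ^ 2) ^ m / (2 * m)! * (2 * (v ^ (2 * m + 1) * exp (-(a * v ^ 2))))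
  have hg_integral (m : ℕ) :
      ∫ v in Ioi 0, g m v = (4 * b ^ 2) ^ m / (2 * m)! * (m ! / a ^ (m + 1)) := by
    simp only [g, integral_const_mul, integral_Ioi_odd_pow_mul_exp_neg_mul_sq ha]
    field_simp
  have hg_int (m : ℕ) : IntegrableOn (g m) (Ioi 0) := by
    have hmoment : IntegrableOn (fun v => v ^ (2 * m + 1) * exp (-(a * v ^ 2))) (Ioi 0) :=
      Integrable.of_integral_ne_zero <| by
        rw [integral_Ioi_odd_pow_mul_exp_neg_mul_sq ha]
        positivity
    exact (hmoment.const_mul 2).const_mul _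
  have hsum : Summable fun m => ∫ v in Ioi 0, ‖g m v‖ := by
    have hg_norm (m : ℕ) : ∫ v in Ioi 0, ‖g m v‖ = ∫ v in Ioi 0, g m v :=
      setIntegral_congr_fun measurableSet_Ioi fun v hv =>
        Real.norm_of_nonneg (by have := hv.out.le; positivity)
    simp only [hg_norm, hg_integral]
    refine ((summable_pow_mul_factorial_div_factorial_two_mul (4 * b ^ 2 / a)).div_const a).congr
      fun m => ?_
    rw [div_pow]
    field_simp
    ring
  calc ∫ v in Ioi 0, 2 * v * exp (-(a * v ^ 2)) * cosh (2 * b * v)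
      = ∫ v in Ioi 0, ∑' m, g m v := by
        refine setIntegral_congr_fun measurableSet_Ioi fun v _ => ?_
        rw [cosh_eq_tsum, ← tsum_mul_left]
        refine tsum_congr fun m => ?_
        simp only [g, mul_pow, pow_mul]
        ring
    _ = ∑' m, ∫ v in Ioi 0, g m v := (integral_tsum_of_summable_integral_norm hg_int hsum).symm
    _ = _ := tsum_congr hg_integral

theorem integral_abs_mul_exp_neg_mul_sq_add {a : ℝ} (ha : 0 < a) (b : ℝ) :
    ∫ v, |v| * exp (-(a * v ^ 2) + 2 * b * v) = hyp1F1 1 (1 / 2) (b ^ 2 / a) / a := by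
  rw [integral_eq_integral_Ioi_add_comp_neg (integrable_abs_mul_exp_neg_mul_sq_add ha b)]
  calc ∫ v in Ioi 0, (|v| * exp (-(a * v ^ 2) + 2 * b * v) +
        |-v| * exp (-(a * (-v) ^ 2) + 2 * b * -v))
      = ∫ v in Ioi 0, 2 * v * exp (-(a * v ^ 2)) * cosh (2 * b * v) := by
        refine setIntegral_congr_fun measurableSet_Ioi fun v hv => ?_
        simp only [abs_neg, abs_of_pos hv.out, neg_sq, cosh_eq, exp_add, mul_neg, exp_neg]
        ring
    _ = _ := by
        rw [integral_Ioi_mul_exp_neg_mul_sq_mul_cosh ha, hyp1F1_one_one_half, ← tsum_div_const]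
        refine tsum_congr fun m => ?_
        rw [div_pow]
        field_simp
        ring

lemma hasFDerivAt_snd_fst_mul_snd (q : ℝ × ℝ) :
    HasFDerivAt (fun q : ℝ × ℝ => (q.2, q.1 * q.2))
      (Matrix.toLin (Module.Basis.finTwoProd ℝ) (Module.Basis.finTwoProd ℝ)
        !![0, 1; q.2, q.1]).toContinuousLinearMap q := by
  rw [Matrix.toLin_finTwoProd_toContinuousLinearMap]
  refine (hasFDerivAt_snd.prodMk (hasFDerivAt_fst.mul hasFDerivAt_snd)).congr_fderiv ?_
  ext <;> simp

lemma ae_fst_ne_zero : ∀ᵐ p : ℝ × ℝ, p.1 ≠ 0 := by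
  rw [Measure.volume_eq_prod]
  exact Measure.quasiMeasurePreserving_fst.ae (Measure.ae_ne volume 0)

lemma ae_snd_ne_zero : ∀ᵐ p : ℝ × ℝ, p.2 ≠ 0 := by
  rw [Measure.volume_eq_prod]
  exact Measure.quasiMeasurePreserving_snd.ae (Measure.ae_ne volume 0)

theorem setIntegral_div_mem_eq_integral_abs_smul {E : Type*} [NormedAddCommGroup E]
    [NormedSpace ℝ E] {f : ℝ × ℝ → E} (hf : Integrable f) {s : Set ℝ}
    (hs : MeasurableSet s) :
    ∫ p in {p : ℝ × ℝ | p.2 / p.1 ∈ s}, f p = ∫ x in s, ∫ v, |v| • f (v, x * v) := by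
  set T : ℝ × ℝ → ℝ × ℝ := fun q => (q.2, q.1 * q.2)
  set S : Set (ℝ × ℝ) := s ×ˢ {0}ᶜ
  have hS : MeasurableSet S := hs.prod (measurableSet_singleton 0).compl
  have hT_deriv (q : ℝ × ℝ) (_ : q ∈ S) :=
    (hasFDerivAt_snd_fst_mul_snd q).hasFDerivWithinAt (s := S)
  have hT_inj : InjOn T S := by
    rintro ⟨x, v⟩ ⟨-, hv⟩ ⟨y, w⟩ - hxy
    simp only [T, Prod.mk.injEq] at hxy
    obtain ⟨rfl, h⟩ := hxy
    rw [mul_right_cancel₀ hv h]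
  have hT_det (q : ℝ × ℝ) :
      |(Matrix.toLin (Module.Basis.finTwoProd ℝ) (Module.Basis.finTwoProd ℝ)
        !![0, 1; q.2, q.1]).toContinuousLinearMap.det| = |q.2| := by
    simp [LinearMap.det_toContinuousLinearMap, LinearMap.det_toLin, Matrix.det_fin_two_of]
  have hT_image : {p : ℝ × ℝ | p.2 / p.1 ∈ s} =ᵐ[volume] T '' S := by
    rw [Filter.eventuallyEq_set]
    filter_upwards [ae_fst_ne_zero] with p hp
    refine ⟨fun h => ⟨(p.2 / p.1, p.1), ⟨h, hp⟩, ?_⟩, ?_⟩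
    · simp [T, div_mul_cancel₀ _ hp]
    · rintro ⟨⟨x, v⟩, ⟨hx, hv⟩, rfl⟩
      simpa [T, mul_div_assoc, div_self hv] using hx
  have hS_ae : S =ᵐ[volume] s ×ˢ univ := by
    rw [Filter.eventuallyEq_set]
    filter_upwards [ae_snd_ne_zero] with p hp
    simp [S, hp]
  have hint : IntegrableOn (fun q : ℝ × ℝ => |q.2| • f (T q)) (s ×ˢ univ) := by
    rw [← integrableOn_congr_set_ae hS_ae]
    simpa only [hT_det] using
      (integrableOn_image_iff_integrableOn_abs_det_fderiv_smul volume hS hT_deriv hT_inj f).1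
        hf.integrableOn
  calc ∫ p in {p : ℝ × ℝ | p.2 / p.1 ∈ s}, f p
      = ∫ p in T '' S, f p := setIntegral_congr_set hT_image
    _ = ∫ q in S, |q.2| • f (T q) := by
        rw [integral_image_eq_integral_abs_det_fderiv_smul volume hS hT_deriv hT_inj]
        simp only [hT_det]
        rfl
    _ = ∫ q in s ×ˢ univ, |q.2| • f (T q) := setIntegral_congr_set hS_ae
    _ = ∫ x in s, ∫ v, |v| • f (v, x * v) := by
        rw [Measure.volume_eq_prod, setIntegral_prod _ hint, Measure.restrict_univ]

lemma MeasureTheory.Integrable.mul_comp_sub_prod {α : Type*} [MeasurableSpace α]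
    {μ : Measure α} [SFinite μ] {g₁ : α → ℝ} {g₂ : ℝ → ℝ} (h₁ : Integrable g₁ μ)
    (h₂ : Integrable g₂) {t : α → ℝ}
    (ht : Measurable t) :
    Integrable (fun p : α × ℝ => g₁ p.1 * g₂ (p.2 - t p.1)) (μ.prod volume) := by
  have hshear : MeasurePreserving (fun p : α × ℝ => (p.1, p.2 - t p.1))
      (μ.prod volume) (μ.prod volume) :=
    (MeasurePreserving.id μ).skew_product (by fun_prop)
      (.of_forall fun _ => map_sub_right_eq_self volume _)
  exact hshear.integrable_comp_of_integrable (h₁.mul_prod h₂)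

noncomputable section

namespace GaussianRatio

variable (νv νw σv σw γ : ℝ)

def det : ℝ := σv ^ 2 * σw ^ 2 - γ ^ 2

def quadForm (v w : ℝ) : ℝ := σw ^ 2 * v ^ 2 - 2 * γ * v * w + σv ^ 2 * w ^ 2

def jointPDF (p : ℝ × ℝ) : ℝ :=
  1 / (2 * π * √(det σv σw γ)) *
    exp (-(1 / (2 * det σv σw γ)) * quadForm σv σw γ (p.1 - νv) (p.2 - νw))

def a (x : ℝ) : ℝ := (σw ^ 2 - 2 * γ * x + σv ^ 2 * x ^ 2) / (2 * det σv σw γ)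

def b (x : ℝ) : ℝ :=
  (σw ^ 2 * νv - γ * νw - γ * νv * x + σv ^ 2 * νw * x) / (2 * det σv σw γ)

def c : ℝ := (σw ^ 2 * νv ^ 2 - 2 * γ * νw * νv + σv ^ 2 * νw ^ 2) / (2 * det σv σw γ)

def pdf (x : ℝ) : ℝ :=
  exp (-c νv νw σv σw γ) / (2 * π * √(det σv σw γ) * a σv σw γ x) *
    hyp1F1 1 (1 / 2) (b νv νw σv σw γ x ^ 2 / a σv σw γ x)

variable {σv σw γ}

lemma ne_zero_of_det_pos (hdet : 0 < det σv σw γ) : σv ≠ 0 := by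
  rintro rfl
  unfold det at hdet
  nlinarith [sq_nonneg γ]

lemma a_pos (hdet : 0 < det σv σw γ) (x : ℝ) : 0 < a σv σw γ x := by
  have hσv := ne_zero_of_det_pos hdet
  refine div_pos ?_ (by positivity)
  unfold det at hdet
  nlinarith [sq_nonneg (σv ^ 2 * x - γ)]

lemma quadForm_div_det (hdet : 0 < det σv σw γ) (v w : ℝ) :
    quadForm σv σw γ v w / (2 * det σv σw γ) =
      1 / (2 * σv ^ 2) * v ^ 2 + σv ^ 2 / (2 * det σv σw γ) * (w - γ / σv ^ 2 * v) ^ 2 := by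
  have hσv := ne_zero_of_det_pos hdet
  have hdet' := hdet.ne'
  field_simp
  unfold quadForm det
  ring

theorem integrable_jointPDF (hdet : 0 < det σv σw γ) :
    Integrable (jointPDF νv νw σv σw γ) := by
  have hσv := ne_zero_of_det_pos hdet
  have h₁ : Integrable fun v : ℝ => exp (-(1 / (2 * σv ^ 2)) * (v - νv) ^ 2) :=
    (integrable_exp_neg_mul_sq (by positivity)).comp_sub_right νv
  have h₂ := integrable_exp_neg_mul_sq (b := σv ^ 2 / (2 * det σv σw γ)) (by positivity)
  have hprod :=
    h₁.mul_comp_sub_prod h₂ (t := fun v => νw + γ / σv ^ 2 * (v - νv)) (by fun_prop)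
  rw [← Measure.volume_eq_prod] at hprod
  refine (hprod.const_mul (1 / (2 * π * √(det σv σw γ)))).congr (.of_forall fun p => ?_)
  simp only [jointPDF, neg_mul, one_div_mul_eq_div, quadForm_div_det hdet, ← exp_add]
  ring_nf

lemma neg_quadForm_div_det_ray (hdet : det σv σw γ ≠ 0) (x v : ℝ) :
    -(1 / (2 * det σv σw γ)) * quadForm σv σw γ (v - νv) (x * v - νw) =
      -(a σv σw γ x * v ^ 2) + 2 * b νv νw σv σw γ x * v + -c νv νw σv σw γ := by
  unfold quadForm a b c
  field_simp
  ring

theorem integral_abs_smul_jointPDF (hdet : 0 < det σv σw γ) (x : ℝ) :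
    ∫ v, |v| • jointPDF νv νw σv σw γ (v, x * v) = pdf νv νw σv σw γ x := by
  have hsplit (v : ℝ) : |v| • jointPDF νv νw σv σw γ (v, x * v) =
      exp (-c νv νw σv σw γ) / (2 * π * √(det σv σw γ)) *
        (|v| * exp (-(a σv σw γ x * v ^ 2) + 2 * b νv νw σv σw γ x * v)) := by
    rw [jointPDF, neg_quadForm_div_det_ray νv νw hdet.ne', exp_add, smul_eq_mul]
    ring
  simp only [hsplit, integral_const_mul, integral_abs_mul_exp_neg_mul_sq_add (a_pos hdet x), pdf]
  ring

end GaussianRatio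

end

theorem stmt4_general (νv νw σv σw γ : ℝ)
    (hdet : 0 < σv ^ 2 * σw ^ 2 - γ ^ 2) :
    ∀ s : Set ℝ, MeasurableSet s →
      (∫ p : ℝ × ℝ in {p : ℝ × ℝ | p.2 / p.1 ∈ s},
          (1 / (2 * Real.pi * Real.sqrt (σv ^ 2 * σw ^ 2 - γ ^ 2))) *
            Real.exp (-(1 / (2 * (σv ^ 2 * σw ^ 2 - γ ^ 2))) *
              (σw ^ 2 * (p.1 - νv) ^ 2 - 2 * γ * (p.1 - νv) * (p.2 - νw) +
                σv ^ 2 * (p.2 - νw) ^ 2)))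
        = ∫ x in s,
            (Real.exp (-((σw ^ 2 * νv ^ 2 - 2 * γ * νw * νv + σv ^ 2 * νw ^ 2) /
                  (2 * (σv ^ 2 * σw ^ 2 - γ ^ 2)))) /
                (2 * Real.pi * Real.sqrt (σv ^ 2 * σw ^ 2 - γ ^ 2) *
                  ((σw ^ 2 - 2 * γ * x + σv ^ 2 * x ^ 2) /
                    (2 * (σv ^ 2 * σw ^ 2 - γ ^ 2))))) *
              hyp1F1 1 (1 / 2)
                (((σw ^ 2 * νv - γ * νw - γ * νv * x + σv ^ 2 * νw * x) /
                    (2 * (σv ^ 2 * σw ^ 2 - γ ^ 2))) ^ 2 /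
                  ((σw ^ 2 - 2 * γ * x + σv ^ 2 * x ^ 2) /
                    (2 * (σv ^ 2 * σw ^ 2 - γ ^ 2)))) := by
  intro s hs
  exact (setIntegral_div_mem_eq_integral_abs_smul
    (GaussianRatio.integrable_jointPDF νv νw hdet) hs).trans
      (setIntegral_congr_fun hs fun x _ => GaussianRatio.integral_abs_smul_jointPDF νv νw hdet x)

theorem stmt4 (νv νw σv σw γ : ℝ) (hσv : 0 < σv) (hσw : 0 < σw)
    (hdet : 0 < σv ^ 2 * σw ^ 2 - γ ^ 2) :
    ∀ s : Set ℝ, MeasurableSet s →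
      (∫ p : ℝ × ℝ in {p : ℝ × ℝ | p.2 / p.1 ∈ s},
          (1 / (2 * Real.pi * Real.sqrt (σv ^ 2 * σw ^ 2 - γ ^ 2))) *
            Real.exp (-(1 / (2 * (σv ^ 2 * σw ^ 2 - γ ^ 2))) *
              (σw ^ 2 * (p.1 - νv) ^ 2 - 2 * γ * (p.1 - νv) * (p.2 - νw) +
                σv ^ 2 * (p.2 - νw) ^ 2)))
        = ∫ x in s,
            (Real.exp (-((σw ^ 2 * νv ^ 2 - 2 * γ * νw * νv + σv ^ 2 * νw ^ 2) /
                  (2 * (σv ^ 2 * σw ^ 2 - γ ^ 2)))) /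
                (2 * Real.pi * Real.sqrt (σv ^ 2 * σw ^ 2 - γ ^ 2) *
                  ((σw ^ 2 - 2 * γ * x + σv ^ 2 * x ^ 2) /
                    (2 * (σv ^ 2 * σw ^ 2 - γ ^ 2))))) *
              hyp1F1 1 (1 / 2)
                (((σw ^ 2 * νv - γ * νw - γ * νv * x + σv ^ 2 * νw * x) /
                    (2 * (σv ^ 2 * σw ^ 2 - γ ^ 2))) ^ 2 /
                  ((σw ^ 2 - 2 * γ * x + σv ^ 2 * x ^ 2) /
                    (2 * (σv ^ 2 * σw ^ 2 - γ ^ 2)))) :=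
  stmt4_general νv νw σv σw γ hdet
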